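/- arXiv:2204.14094 — 2 statements merged into one kernel-verified Lean document; each statement's English description precedes it below -/
import Mathlib

section
/- For any single-peaked profile, the candidates with minimal Minimax Condorcet score are exactly the weak Condorcet winners; in particular a candidate has MMC score ≤ 0 if and only if it is a weak Condorcet winner, and such a candidate exists. -/
open Finset

/-- A ranking over `m` candidates: `r c` is the position of candidate `c`
(position `0` = most preferred). -/
abbrev Ranking (m : ℕ) := Equiv.Perm (Fin m)

/-- Voter with ranking `r` prefers `a` to `b`. -/
def Prefers {m : ℕ} (r : Ranking m) (a b : Fin m) : Prop := r a < r b

/-- A ranking is single-peaked w.r.t. the axis `c_0 ▷ c_1 ▷ ... ▷ c_{m-1}`. -/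
def IsSinglePeaked {m : ℕ} (r : Ranking m) : Prop :=
  ∀ i j k : Fin m, i < j → j < k →
    (Prefers r i j → Prefers r j k) ∧ (Prefers r k j → Prefers r j i)

/-- A profile is single-peaked if all its rankings are. -/
def SPProfile {V : Type*} {m : ℕ} (P : V → Ranking m) : Prop :=
  ∀ v, IsSinglePeaked (P v)

/-- Popularity margin of `a` over `b`. -/
noncomputable def pop {V : Type*} [Fintype V] {m : ℕ} (P : V → Ranking m)
    (a b : Fin m) : ℤ :=
  (Nat.card {v : V // Prefers (P v) a b} : ℤ) -
    (Nat.card {v : V // Prefers (P v) b a} : ℤ)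

/-- Minimax Condorcet score of candidate `c`: worst defeat margin. -/
noncomputable def mmc {V : Type*} [Fintype V] {m : ℕ} (P : V → Ranking m)
    (c : Fin m) : WithBot ℤ :=
  (Finset.univ.erase c).sup (fun c' => ((pop P c' c : ℤ) : WithBot ℤ))

/-- Kendall's tau distance between two rankings. -/
noncomputable def kt {m : ℕ} (r s : Ranking m) : ℕ :=
  Nat.card {p : Fin m × Fin m //
    p.1 < p.2 ∧ ¬ (Prefers r p.1 p.2 ↔ Prefers s p.1 p.2)}

/-- Kemeny score of ranking `r` w.r.t. profile `P`. -/
noncomputable def ktSum {V : Type*} [Fintype V] {m : ℕ} (r : Ranking m)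
    (P : V → Ranking m) : ℕ :=
  ∑ v, kt r (P v)

/-- The peak (top candidate) of a ranking. -/
def peak {m : ℕ} (r : Ranking (m + 1)) : Fin (m + 1) := r.symm 0

/-! A weak Condorcet winner `w` has MMC score `≤ 0`, whereas every other candidate `c'` has MMC
score at least `pop w c' ≥ 0`; so once a weak Condorcet winner exists, the minimisers of the MMC
score are exactly the weak Condorcet winners. In a single-peaked profile a median peak `c` is one:
at least half of the voters have their peak weakly on each side of `c`, and a voter whose peak lies
on the opposite side of `c` from `c'` prefers `c` to `c'`. -/

theorem exists_median {ι α : Type*} [Fintype ι] [LinearOrder α] [Nonempty α]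
    (f : ι → α) :
    ∃ c, Fintype.card ι ≤ 2 * #{i | f i ≤ c} ∧ Fintype.card ι ≤ 2 * #{i | c ≤ f i} := by
  rcases isEmpty_or_nonempty ι with hι | hι
  · exact ⟨Classical.arbitrary α, by simp, by simp⟩
  set n := Fintype.card ι
  set S := (univ.image f).filter fun c => n ≤ 2 * #{i | f i ≤ c}
  have hS : S.Nonempty := by
    have hne : (univ.image f).Nonempty := univ_nonempty.image f
    refine ⟨(univ.image f).max' hne, mem_filter.2 ⟨max'_mem _ _, ?_⟩⟩
    rw [filter_true_of_mem fun i _ => le_max' _ _ (mem_image_of_mem f (mem_univ i)), card_univ]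
    omega
  set c := S.min' hS
  refine ⟨c, (mem_filter.1 (S.min'_mem hS)).2, ?_⟩
  have hsplit : #{i | f i < c} + #{i | c ≤ f i} = n := by
    simpa only [not_lt, card_univ] using card_filter_add_card_filter_not (s := univ) fun i => f i < c
  suffices 2 * #{i | f i < c} < n by omega
  obtain hlt | hlt := ({i | f i < c} : Finset ι).eq_empty_or_nonempty
  · rw [hlt, card_empty]
    exact Fintype.card_pos
  set d := (({i | f i < c} : Finset ι).image f).max' (hlt.image f)
  have hd_lt : d < c := by
    have : ∀ x ∈ ({i | f i < c} : Finset ι).image f, x < c := by simp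
    exact this d (max'_mem _ _)
  have hle_d : ∀ i, f i ≤ d ↔ f i < c := fun i =>
    ⟨fun h => h.trans_lt hd_lt, fun h => le_max' _ _ (mem_image_of_mem f (by simpa using h))⟩
  have hd : d ∉ S := fun hdS => (S.min'_le d hdS).not_gt hd_lt
  have hd_img : d ∈ univ.image f :=
    image_subset_image (filter_subset _ _) (max'_mem _ (hlt.image f))
  simpa only [S, mem_filter, hd_img, true_and, not_le, hle_d] using hd

instance instDecidablePrefers {m : ℕ} (r : Ranking m) (a b : Fin m) : Decidable (Prefers r a b) :=
  inferInstanceAs (Decidable (r a < r b))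

theorem not_prefers_iff {m : ℕ} {r : Ranking m} {a b : Fin m} (hab : a ≠ b) :
    ¬ Prefers r a b ↔ Prefers r b a :=
  not_lt.trans (r.injective.ne hab.symm).le_iff_lt

section SinglePeaked

variable {m : ℕ} {r : Ranking (m + 1)}

theorem prefers_peak {c : Fin (m + 1)} (hc : c ≠ peak r) :
    Prefers r (peak r) c := by
  have hpeak : r (peak r) = 0 := r.apply_symm_apply 0
  have hc : r c ≠ 0 := fun h => hc (r.injective (h.trans hpeak.symm))
  rw [Prefers, hpeak]
  exact Fin.pos_iff_ne_zero.2 hc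

theorem IsSinglePeaked.prefers_of_peak_le (h : IsSinglePeaked r) {c c' : Fin (m + 1)}
    (hpc : peak r ≤ c) (hcc' : c < c') : Prefers r c c' := by
  rcases hpc.eq_or_lt with rfl | hpc
  · exact prefers_peak hcc'.ne'
  · exact (h _ _ _ hpc hcc').1 (prefers_peak hpc.ne')

theorem IsSinglePeaked.prefers_of_le_peak (h : IsSinglePeaked r) {c c' : Fin (m + 1)}
    (hcp : c ≤ peak r) (hc'c : c' < c) : Prefers r c c' := by
  rcases hcp.eq_or_lt with rfl | hcp
  · exact prefers_peak hc'c.ne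
  · exact (h _ _ _ hc'c hcp).2 (prefers_peak hcp.ne)

end SinglePeaked

section Popularity

variable {V : Type*} [Fintype V] {m : ℕ} (P : V → Ranking m)

def IsWeakCondorcetWinner (c : Fin m) : Prop := ∀ c', c' ≠ c → pop P c' c ≤ 0

theorem pop_eq_card_sub_card (a b : Fin m) :
    pop P a b = #{v | Prefers (P v) a b} - #{v | Prefers (P v) b a} := by
  simp only [pop, Nat.card_eq_fintype_card, Fintype.card_subtype]

theorem pop_swap (a b : Fin m) : pop P b a = -pop P a b := by
  simp only [pop]
  ring

theorem card_prefers_add_card_prefers {a b : Fin m} (hab : a ≠ b) :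
    #{v | Prefers (P v) a b} + #{v | Prefers (P v) b a} = Fintype.card V := by
  simpa only [not_prefers_iff hab, card_univ] using
    card_filter_add_card_filter_not (s := univ) fun v => Prefers (P v) a b

theorem pop_nonpos_of_card_le_two_mul {a b : Fin m} (hab : a ≠ b)
    (h : Fintype.card V ≤ 2 * #{v | Prefers (P v) b a}) : pop P a b ≤ 0 := by
  have := card_prefers_add_card_prefers P hab
  rw [pop_eq_card_sub_card]
  omega

theorem mmc_le_zero_iff (c : Fin m) : mmc P c ≤ 0 ↔ IsWeakCondorcetWinner P c := by
  simp only [mmc, Finset.sup_le_iff, mem_erase, mem_univ, and_true, IsWeakCondorcetWinner,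
    ← WithBot.coe_zero, WithBot.coe_le_coe]

theorem pop_le_mmc {c c' : Fin m} (h : c' ≠ c) : (pop P c' c : WithBot ℤ) ≤ mmc P c :=
  le_sup (f := fun c' => (pop P c' c : WithBot ℤ)) (mem_erase.2 ⟨h, mem_univ _⟩)

variable {P}

theorem IsWeakCondorcetWinner.mmc_le {c : Fin m} (hc : IsWeakCondorcetWinner P c) (c' : Fin m) :
    mmc P c ≤ mmc P c' := by
  rcases eq_or_ne c' c with rfl | hc'
  · rfl
  calc mmc P c ≤ 0 := (mmc_le_zero_iff P c).2 hc
    _ ≤ (pop P c c' : WithBot ℤ) := by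
      rw [pop_swap]
      exact_mod_cast neg_nonneg.2 (hc c' hc')
    _ ≤ mmc P c' := pop_le_mmc P hc'.symm

end Popularity

theorem SPProfile.exists_isWeakCondorcetWinner {V : Type*} [Fintype V] {m : ℕ}
    {P : V → Ranking (m + 1)} (hsp : SPProfile P) : ∃ c, IsWeakCondorcetWinner P c := by
  obtain ⟨c, hle, hge⟩ := exists_median fun v => peak (P v)
  refine ⟨c, fun c' hc' => pop_nonpos_of_card_le_two_mul P hc' ?_⟩
  rcases hc'.lt_or_gt with hc'c | hcc'
  · exact hge.trans (by gcongr with v; exact fun hv => (hsp v).prefers_of_le_peak hv hc'c)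
  · exact hle.trans (by gcongr with v; exact fun hv => (hsp v).prefers_of_peak_le hv hcc')

/-- in a single-peaked profile the candidates of minimal MMC score
are exactly the weak Condorcet winners; a candidate has MMC score ≤ 0 iff it is
a weak Condorcet winner, and such a candidate exists. -/
theorem stmt_10 {V : Type*} [Fintype V] {m : ℕ} (P : V → Ranking (m + 1))
    (hsp : SPProfile P) :
    (∀ c : Fin (m + 1),
      (∀ c' : Fin (m + 1), mmc P c ≤ mmc P c') ↔
        (∀ c' : Fin (m + 1), c' ≠ c → pop P c' c ≤ 0)) ∧
    (∀ c : Fin (m + 1),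
      mmc P c ≤ (0 : WithBot ℤ) ↔ (∀ c' : Fin (m + 1), c' ≠ c → pop P c' c ≤ 0)) ∧
    (∃ c : Fin (m + 1), ∀ c' : Fin (m + 1), c' ≠ c → pop P c' c ≤ 0) := by
  obtain ⟨w, hw⟩ := hsp.exists_isWeakCondorcetWinner
  refine ⟨fun c => ⟨fun hmin => ?_, IsWeakCondorcetWinner.mmc_le⟩, mmc_le_zero_iff P, w, hw⟩
  exact (mmc_le_zero_iff P c).1 ((hmin w).trans ((mmc_le_zero_iff P w).2 hw))
end

section
/- If a weak majority (at least half) of the voters in a profile share the same ranking r, then r is a Kemeny ranking of the profile. -/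
open Finset

/- Moving the centre from `r` to `s` costs at most `d r s` (triangle inequality) for each voter
outside the majority and gains exactly `d r s` for each voter inside it. -/
theorem sum_le_sum_of_two_mul_card_le {V α : Type*} [Fintype V] (d : α → α → ℕ)
    (hself : ∀ x, d x x = 0) (hcomm : ∀ x y, d x y = d y x)
    (htriangle : ∀ x y z, d x z ≤ d x y + d y z) (P : V → α) (r s : α)
    (hmaj : Fintype.card V ≤ 2 * Nat.card {v : V // P v = r}) :
    ∑ v, d r (P v) ≤ ∑ v, d s (P v) := by
  classical
  set A := univ.filter (P · = r)
  have hA : ∀ v ∈ A, P v = r := fun v hv => (mem_filter.1 hv).2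
  have hminority : #Aᶜ ≤ #A := by
    have hcard : Nat.card {v : V // P v = r} = #A := by
      rw [Nat.card_eq_fintype_card, Fintype.card_subtype]
    have := card_add_card_compl A
    omega
  calc ∑ v, d r (P v) = ∑ v ∈ Aᶜ, d r (P v) := by
        rw [← sum_add_sum_compl A, sum_eq_zero fun v hv => by rw [hA v hv, hself], zero_add]
    _ ≤ ∑ v ∈ Aᶜ, (d r s + d s (P v)) := sum_le_sum fun v _ => htriangle _ _ _
    _ = #Aᶜ * d r s + ∑ v ∈ Aᶜ, d s (P v) := by rw [sum_add_distrib, sum_const, smul_eq_mul]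
    _ ≤ #A * d r s + ∑ v ∈ Aᶜ, d s (P v) := by gcongr
    _ = ∑ v ∈ A, d s (P v) + ∑ v ∈ Aᶜ, d s (P v) := by
        rw [sum_congr rfl fun v hv => (congrArg (d s) (hA v hv)).trans (hcomm s r), sum_const,
          smul_eq_mul]
    _ = ∑ v, d s (P v) := sum_add_sum_compl A _

section KendallTau

open scoped Classical

variable {m : ℕ}

theorem kt_eq_card_filter (r s : Ranking m) :
    kt r s = #(univ.filter fun p : Fin m × Fin m =>
      p.1 < p.2 ∧ ¬ (Prefers r p.1 p.2 ↔ Prefers s p.1 p.2)) := by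
  rw [kt, Nat.card_eq_fintype_card, Fintype.card_subtype]

theorem kt_self (r : Ranking m) : kt r r = 0 := by
  simp [kt_eq_card_filter]

theorem kt_comm (r s : Ranking m) : kt r s = kt s r := by
  simp only [kt_eq_card_filter, iff_comm]

theorem kt_triangle (r s t : Ranking m) : kt r t ≤ kt r s + kt s t := by
  simp only [kt_eq_card_filter]
  refine (card_le_card fun p hp => ?_).trans (card_union_le _ _)
  simp only [mem_filter, mem_union, mem_univ, true_and] at hp ⊢
  tauto

end KendallTau

/-- if a weak majority of the voters share the same ranking `r`,
then `r` is a Kemeny ranking of the profile. -/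
theorem stmt_16 {V : Type*} [Fintype V] {m : ℕ} (P : V → Ranking m)
    (r : Ranking m)
    (hmaj : Fintype.card V ≤ 2 * Nat.card {v : V // P v = r}) :
    ∀ s : Ranking m, ktSum r P ≤ ktSum s P :=
  fun s => sum_le_sum_of_two_mul_card_le kt kt_self kt_comm kt_triangle P r s hmaj
end
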